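/- arXiv:1512.05798 — 2 statements merged into one kernel-verified Lean document; each statement's English description precedes it below -/
import Mathlib

section
/- The inequality (1−p)·(sin x)/x + p·(tan x)/x > 1 holds for all x in (0, π/2) if and only if p ≥ 1/3. -/
/-! The gap `g p x = (1 - p) sin x + p tan x - x` vanishes at `0` and, writing `c = cos x`,
has derivative `(1 - c) / c² · (p (c² + c + 1) - c²)` in `x`. For `p ≥ 1/3` the last factor
is positive on `(0, π/2)`, since `c² < (c² + c + 1) / 3` for `0 < c < 1`, so `g p` increases
and stays positive. For `p < 1/3` the factor tends to `3p - 1 < 0` as `x → 0`, so `g p`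
decreases, and becomes negative, on some interval `(0, a)`. -/

open Real Set Filter Topology

noncomputable def huygensGap (p x : ℝ) : ℝ := (1 - p) * sin x + p * tan x - x

theorem huygensGap_zero (p : ℝ) : huygensGap p 0 = 0 := by
  simp [huygensGap]

theorem huygens_mean_gt_one_iff (p : ℝ) {x : ℝ} (hx : 0 < x) :
    (1 - p) * sin x / x + p * tan x / x > 1 ↔ 0 < huygensGap p x := by
  rw [← add_div, gt_iff_lt, one_lt_div hx, huygensGap, sub_pos]

theorem hasDerivAt_huygensGap (p : ℝ) {x : ℝ} (hx : cos x ≠ 0) :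
    HasDerivAt (huygensGap p)
      ((1 - cos x) / cos x ^ 2 * (p * (cos x ^ 2 + cos x + 1) - cos x ^ 2)) x := by
  refine ((((hasDerivAt_sin x).const_mul (1 - p)).add
    ((hasDerivAt_tan hx).const_mul p)).sub (hasDerivAt_id x)).congr_deriv ?_
  field_simp
  ring

theorem cos_mem_Ioo_of_mem_Ioo {x : ℝ} (hx : x ∈ Ioo 0 (π / 2)) : cos x ∈ Ioo 0 1 :=
  ⟨cos_pos_of_mem_Ioo ⟨by linarith [pi_pos, hx.1], hx.2⟩,
    cos_zero ▸ cos_lt_cos_of_nonneg_of_le_pi_div_two le_rfl hx.2.le hx.1⟩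

section Monotonicity

variable {p a : ℝ}

theorem continuousOn_huygensGap (ha : a ≤ π / 2) : ContinuousOn (huygensGap p) (Ico 0 a) :=
  continuousOn_of_forall_continuousAt fun x hx =>
    (hasDerivAt_huygensGap p (cos_pos_of_mem_Ioo
      ⟨by linarith [pi_pos, hx.1], hx.2.trans_le ha⟩).ne').continuousAt

theorem deriv_huygensGap_eq_pos_mul {x : ℝ} (hx : x ∈ Ioo 0 (π / 2)) :
    ∃ k > 0, deriv (huygensGap p) x = k * (p * (cos x ^ 2 + cos x + 1) - cos x ^ 2) := by
  obtain ⟨hc0, hc1⟩ := cos_mem_Ioo_of_mem_Ioo hx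
  exact ⟨_, div_pos (sub_pos.2 hc1) (pow_pos hc0 2), (hasDerivAt_huygensGap p hc0.ne').deriv⟩

theorem huygensGap_pos (ha : a ≤ π / 2)
    (h : ∀ x ∈ Ioo 0 a, cos x ^ 2 < p * (cos x ^ 2 + cos x + 1))
    {x : ℝ} (hx : x ∈ Ioo 0 a) :
    0 < huygensGap p x := by
  have hmono : StrictMonoOn (huygensGap p) (Ico 0 a) := by
    refine strictMonoOn_of_deriv_pos (convex_Ico 0 a) (continuousOn_huygensGap ha) fun y hy => ?_
    rw [interior_Ico] at hy
    obtain ⟨k, hk, hderiv⟩ := deriv_huygensGap_eq_pos_mul (p := p) ⟨hy.1, hy.2.trans_le ha⟩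
    exact hderiv ▸ mul_pos hk (sub_pos.2 (h y hy))
  simpa only [huygensGap_zero] using
    hmono ⟨le_rfl, hx.1.trans hx.2⟩ (Ioo_subset_Ico_self hx) hx.1

theorem huygensGap_neg (ha : a ≤ π / 2)
    (h : ∀ x ∈ Ioo 0 a, p * (cos x ^ 2 + cos x + 1) < cos x ^ 2)
    {x : ℝ} (hx : x ∈ Ioo 0 a) :
    huygensGap p x < 0 := by
  have hanti : StrictAntiOn (huygensGap p) (Ico 0 a) := by
    refine strictAntiOn_of_deriv_neg (convex_Ico 0 a) (continuousOn_huygensGap ha) fun y hy => ?_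
    rw [interior_Ico] at hy
    obtain ⟨k, hk, hderiv⟩ := deriv_huygensGap_eq_pos_mul (p := p) ⟨hy.1, hy.2.trans_le ha⟩
    exact hderiv ▸ mul_neg_of_pos_of_neg hk (sub_neg.2 (h y hy))
  simpa only [huygensGap_zero] using
    hanti ⟨le_rfl, hx.1.trans hx.2⟩ (Ioo_subset_Ico_self hx) hx.1

end Monotonicity

theorem huygensGap_pos_of_one_third_le {p x : ℝ} (hp : 1 / 3 ≤ p) (hx : x ∈ Ioo 0 (π / 2)) :
    0 < huygensGap p x := by
  refine huygensGap_pos le_rfl (fun y hy => ?_) hx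
  obtain ⟨hc0, hc1⟩ := cos_mem_Ioo_of_mem_Ioo hy
  nlinarith [mul_pos (sub_pos.2 hc1) (by linarith : 0 < 1 + 2 * cos y)]

theorem exists_huygensGap_neg {p : ℝ} (hp : p < 1 / 3) :
    ∃ x, 0 < x ∧ x < π / 2 ∧ huygensGap p x < 0 := by
  have hnear : ∀ᶠ x in 𝓝 0, p * (cos x ^ 2 + cos x + 1) < cos x ^ 2 := by
    refine ContinuousAt.eventually_lt (by fun_prop) (by fun_prop) ?_
    simp only [cos_zero, one_pow]
    linarith
  obtain ⟨ε, hε, hball⟩ := Metric.eventually_nhds_iff.1 hnear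
  set a := min ε (π / 2)
  have ha : 0 < a := lt_min hε (by linarith [pi_pos])
  have haπ : a ≤ π / 2 := min_le_right _ _
  refine ⟨a / 2, by linarith, by linarith, ?_⟩
  refine huygensGap_neg haπ (fun x hx => hball ?_) ⟨by linarith, by linarith⟩
  rw [dist_zero_right, norm_of_nonneg hx.1.le]
  exact hx.2.trans_le (min_le_left _ _)

theorem huygens_type_p_circular (p : ℝ) :
    (∀ x : ℝ, 0 < x → x < π / 2 →
      (1 - p) * Real.sin x / x + p * Real.tan x / x > 1) ↔ p ≥ 1 / 3 := by
  constructor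
  · intro h
    by_contra! hp
    obtain ⟨x, hx0, hxπ, hneg⟩ := exists_huygensGap_neg hp
    exact hneg.not_gt ((huygens_mean_gt_one_iff p hx0).1 (h x hx0 hxπ))
  · intro hp x hx0 hxπ
    exact (huygens_mean_gt_one_iff p hx0).2 (huygensGap_pos_of_one_third_le hp ⟨hx0, hxπ⟩)
end

section
/- Let −1 < ν ≤ 0 and let j_{ν,1} be the first positive zero of J_ν. Then (1−p)·𝒥_{ν+1}(x) + p·𝒥_{ν+1}(x)/𝒥_ν(x) > 1 > (1−q)·𝒥_{ν+1}(x) + q·𝒥_{ν+1}(x)/𝒥_ν(x) holds for all x in (0, j_{ν,1}) if and only if p ≥ (ν+1)/(ν+2) and q ≤ 0. -/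
/-- The normalized Bessel function of the first kind,
`𝒥_ν(x) = 2^ν Γ(ν+1) x^{-ν} J_ν(x) = ∑ (-1/4)^n x^(2n) / ((ν+1)_n n!)`. -/
noncomputable def besselJn (ν x : ℝ) : ℝ :=
  ∑' n : ℕ, ((-1 / 4 : ℝ) ^ n * x ^ (2 * n)) * Real.Gamma (ν + 1) /
    (Real.Gamma (ν + n + 1) * n.factorial)

/-!
Write `u = 𝒥_ν`, `v = 𝒥_{ν+1}`, `w = 𝒥_{ν+2}`. Where `u > 0` the two inequalities read
`u (1 - v) < p · v (1 - u)` and `q · v (1 - u) < u (1 - v)`.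

Termwise integration of the power series gives
`∫₀ˣ t^{2μ+1} 𝒥_μ(t) dt = x^{2μ+2} 𝒥_{μ+1}(x) / (2μ+2)` and
`∫₀ˣ t 𝒥_{μ+1}(t) dt = 2(μ+1)(1 - 𝒥_μ(x))`. On `(0, j)` the first one carries positivity from
`u` to `v` and `w`, the second then makes `u` and `v` decreasing, and together they give `v < w`
and `4(ν+1)(1 - u) ≤ x²`. Combined with the recurrence `4(ν+1)(ν+2)(v - u) = x² w` this yields
`(ν+2) u (1 - v) < (ν+1) v (1 - u)`, which is sufficiency. The constants are sharp:
`u (1 - v) / (v (1 - u)) → (ν+1)/(ν+2)` as `x → 0`, and at `x = j` the numerator vanishes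
while the denominator is `v(j) > 0`.
-/

open Real MeasureTheory Set Topology
open scoped Nat

noncomputable def besselCoeff (μ : ℝ) (n : ℕ) : ℝ :=
  (-1 / 4 : ℝ) ^ n * Gamma (μ + 1) / (Gamma (μ + n + 1) * n !)

lemma besselJn_eq_tsum (μ x : ℝ) : besselJn μ x = ∑' n, besselCoeff μ n * x ^ (2 * n) := by
  simp only [besselJn, besselCoeff]
  congr 1 with n
  ring

section Coeff

variable {μ : ℝ}

lemma add_natCast_add_one_pos (hμ : -1 < μ) (n : ℕ) : 0 < μ + n + 1 := by
  have : (0 : ℝ) ≤ n := n.cast_nonneg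
  linarith

lemma besselCoeff_zero (hμ : -1 < μ) : besselCoeff μ 0 = 1 := by
  have : Gamma (μ + 1) ≠ 0 := (Gamma_pos_of_pos (by linarith)).ne'
  simp [besselCoeff, this]

lemma besselCoeff_succ (hμ : -1 < μ) (n : ℕ) :
    besselCoeff μ (n + 1) = -besselCoeff μ n / (4 * (n + 1) * (μ + n + 1)) := by
  have hn := add_natCast_add_one_pos hμ n
  have hΓ : Gamma (μ + n + 1) ≠ 0 := (Gamma_pos_of_pos hn).ne'
  simp only [besselCoeff, Nat.factorial_succ, Nat.cast_mul, Nat.cast_succ, pow_succ]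
  rw [show μ + ((n : ℝ) + 1) + 1 = (μ + n + 1) + 1 by ring, Gamma_add_one hn.ne']
  field_simp

lemma besselCoeff_add_one (hμ : -1 < μ) (n : ℕ) :
    besselCoeff (μ + 1) n = (μ + 1) / (μ + n + 1) * besselCoeff μ n := by
  have hn := add_natCast_add_one_pos hμ n
  have hΓ : Gamma (μ + n + 1) ≠ 0 := (Gamma_pos_of_pos hn).ne'
  simp only [besselCoeff]
  rw [show μ + 1 + n + 1 = (μ + n + 1) + 1 by ring, Gamma_add_one hn.ne',
    Gamma_add_one (by linarith : μ + 1 ≠ 0)]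
  field_simp

lemma abs_besselCoeff_le (hμ : -1 < μ) (n : ℕ) :
    |besselCoeff μ n| ≤ (4 * (μ + 1))⁻¹ ^ n / n ! := by
  have hμ' : 0 < μ + 1 := by linarith
  induction n with
  | zero => simp [besselCoeff_zero hμ]
  | succ n ih =>
    have hn := add_natCast_add_one_pos hμ n
    have hd : 0 < 4 * ((n : ℝ) + 1) * (μ + n + 1) := mul_pos (by positivity) hn
    rw [besselCoeff_succ hμ, abs_div, abs_neg, abs_of_pos hd, div_le_iff₀ hd]
    calc |besselCoeff μ n| ≤ (4 * (μ + 1))⁻¹ ^ n / n ! := ih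
      _ = (4 * (μ + 1))⁻¹ ^ (n + 1) / (n + 1)! * (4 * (n + 1) * (μ + 1)) := by
        rw [Nat.factorial_succ, pow_succ]; push_cast; field_simp
      _ ≤ _ := by gcongr; simp

end Coeff

section EvenPowerSeries

variable {c : ℕ → ℝ} {A r : ℝ}

lemma abs_mul_even_pow_le (hc : ∀ n, |c n| ≤ A * (r ^ n / n !)) {x R : ℝ} (hx : |x| ≤ R)
    (n : ℕ) : |c n * x ^ (2 * n)| ≤ A * ((r * R ^ 2) ^ n / n !) := by
  have hx2 : (x ^ 2) ^ n ≤ (R ^ 2) ^ n :=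
    pow_le_pow_left₀ (sq_nonneg x) (sq_le_sq' (abs_le.1 hx).1 (abs_le.1 hx).2) n
  calc |c n * x ^ (2 * n)| = |c n| * (x ^ 2) ^ n := by
        rw [pow_mul, abs_mul, abs_of_nonneg (pow_nonneg (sq_nonneg x) n)]
    _ ≤ A * (r ^ n / n !) * (R ^ 2) ^ n :=
        mul_le_mul (hc n) hx2 (by positivity) ((abs_nonneg _).trans (hc n))
    _ = A * ((r * R ^ 2) ^ n / n !) := by ring

lemma summable_mul_even_pow (hc : ∀ n, |c n| ≤ A * (r ^ n / n !)) (x : ℝ) :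
    Summable fun n => c n * x ^ (2 * n) :=
  .of_norm_bounded ((summable_pow_div_factorial _).mul_left A)
    (abs_mul_even_pow_le hc le_rfl)

lemma continuous_tsum_mul_even_pow (hc : ∀ n, |c n| ≤ A * (r ^ n / n !)) :
    Continuous fun x => ∑' n, c n * x ^ (2 * n) := by
  refine continuous_iff_continuousAt.2 fun x₀ => ?_
  have hR : Icc (-(|x₀| + 1)) (|x₀| + 1) ∈ 𝓝 x₀ :=
    Icc_mem_nhds (by linarith [neg_abs_le x₀]) (by linarith [le_abs_self x₀])
  refine (continuousOn_tsum (fun n => by fun_prop) ((summable_pow_div_factorial _).mul_left A)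
    fun n x hx => abs_mul_even_pow_le hc (abs_le.2 hx) n).continuousAt hR

end EvenPowerSeries

noncomputable def besselTail (μ x : ℝ) : ℝ := ∑' n, besselCoeff μ (n + 1) * x ^ (2 * n)

section Series

variable {μ : ℝ}

lemma abs_besselCoeff_succ_le (hμ : -1 < μ) (n : ℕ) :
    |besselCoeff μ (n + 1)| ≤ (4 * (μ + 1))⁻¹ * ((4 * (μ + 1))⁻¹ ^ n / n !) := by
  have hμ' : 0 < μ + 1 := by linarith
  refine (abs_besselCoeff_le hμ (n + 1)).trans ?_
  rw [pow_succ', mul_div_assoc]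
  gcongr
  exact n.le_succ

lemma summable_besselCoeff_mul (hμ : -1 < μ) (x : ℝ) :
    Summable fun n => besselCoeff μ n * x ^ (2 * n) :=
  summable_mul_even_pow (fun n => (abs_besselCoeff_le hμ n).trans_eq (one_mul _).symm) x

@[fun_prop]
lemma continuous_besselJn (hμ : -1 < μ) : Continuous (besselJn μ) := by
  simpa only [← besselJn_eq_tsum] using continuous_tsum_mul_even_pow
    fun n => (abs_besselCoeff_le hμ n).trans_eq (one_mul _).symm

@[fun_prop]
lemma continuous_besselTail (hμ : -1 < μ) : Continuous (besselTail μ) :=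
  continuous_tsum_mul_even_pow (abs_besselCoeff_succ_le hμ)

lemma besselJn_eq_one_add_sq_mul_besselTail (hμ : -1 < μ) (x : ℝ) :
    besselJn μ x = 1 + x ^ 2 * besselTail μ x := by
  rw [besselJn_eq_tsum, (summable_besselCoeff_mul hμ x).tsum_eq_zero_add, besselTail,
    ← tsum_mul_left, besselCoeff_zero hμ]
  congr 1
  · simp
  · congr 1 with n
    ring

lemma besselJn_apply_zero (hμ : -1 < μ) : besselJn μ 0 = 1 := by
  simp [besselJn_eq_one_add_sq_mul_besselTail hμ]

lemma besselTail_apply_zero (hμ : -1 < μ) : besselTail μ 0 = -(4 * (μ + 1))⁻¹ := by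
  rw [besselTail, tsum_eq_single 0 fun n hn => by simp [hn], besselCoeff_succ hμ,
    besselCoeff_zero hμ]
  simp only [CharP.cast_eq_zero, zero_add, mul_zero, pow_zero, mul_one, add_zero]
  ring

lemma besselCoeff_add_one_sub (hμ : -1 < μ) (n : ℕ) :
    4 * (μ + 1) * (μ + 2) * (besselCoeff (μ + 1) (n + 1) - besselCoeff μ (n + 1)) =
      besselCoeff (μ + 2) n := by
  have hn' := add_natCast_add_one_pos hμ (n + 1)
  have h2 := besselCoeff_add_one (μ := μ + 1) (by linarith) n
  rw [show μ + 1 + 1 = μ + 2 by ring] at h2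
  rw [h2, besselCoeff_add_one hμ, besselCoeff_add_one hμ, besselCoeff_succ hμ]
  have hn'' : μ + 1 + n + 1 ≠ 0 := by linarith
  push_cast at hn' ⊢
  field_simp
  ring

lemma four_mul_besselJn_add_one_sub (hμ : -1 < μ) (x : ℝ) :
    4 * (μ + 1) * (μ + 2) * (besselJn (μ + 1) x - besselJn μ x) =
      x ^ 2 * besselJn (μ + 2) x := by
  have hμ1 : -1 < μ + 1 := by linarith
  have hT : 4 * (μ + 1) * (μ + 2) * (besselTail (μ + 1) x - besselTail μ x) =
      besselJn (μ + 2) x := by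
    rw [besselTail, besselTail,
      ← (summable_mul_even_pow (abs_besselCoeff_succ_le hμ1) x).tsum_sub
        (summable_mul_even_pow (abs_besselCoeff_succ_le hμ) x),
      ← tsum_mul_left, besselJn_eq_tsum]
    congr 1 with n
    rw [← besselCoeff_add_one_sub hμ n]
    ring
  rw [besselJn_eq_one_add_sq_mul_besselTail hμ, besselJn_eq_one_add_sq_mul_besselTail hμ1, ← hT]
  ring

end Series

section Integral

variable {a x : ℝ}

lemma setIntegral_Ioc_rpow_mul_pow (ha : -1 < a) (hx : 0 ≤ x) (n : ℕ) :
    ∫ t in Ioc 0 x, t ^ a * t ^ (2 * n) = x ^ (a + 2 * n + 1) / (a + 2 * n + 1) := by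
  have hn : -1 < a + 2 * n := by have : (0 : ℝ) ≤ n := n.cast_nonneg; linarith
  rw [setIntegral_congr_fun (g := fun t => t ^ (a + 2 * n)) measurableSet_Ioc fun t ht => by
      rw [← rpow_natCast, ← rpow_add ht.1]; push_cast; rfl,
    ← intervalIntegral.integral_of_le hx, integral_rpow (.inl hn), zero_rpow (by linarith),
    sub_zero]

lemma integral_rpow_mul_tsum (ha : -1 < a) (hx : 0 ≤ x) {c : ℕ → ℝ}
    (hc : Summable fun n => c n * x ^ (2 * n)) :
    ∫ t in (0)..x, t ^ a * ∑' n, c n * t ^ (2 * n) =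
      ∑' n, c n * (x ^ (a + 2 * n + 1) / (a + 2 * n + 1)) := by
  have hrpow : IntervalIntegrable (fun t : ℝ => t ^ a) volume 0 x :=
    intervalIntegral.intervalIntegrable_rpow' ha
  have hint (n : ℕ) :
      Integrable (fun t => c n * (t ^ a * t ^ (2 * n))) (volume.restrict (Ioc 0 x)) :=
    ((hrpow.mul_continuousOn (continuous_pow _).continuousOn).1).const_mul _
  have hbound (n : ℕ) : ∫ t in Ioc 0 x, ‖c n * (t ^ a * t ^ (2 * n))‖ ≤
      |c n * x ^ (2 * n)| * ∫ t in Ioc 0 x, t ^ a := by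
    rw [← integral_const_mul]
    refine setIntegral_mono_on (hint n).norm (hrpow.1.const_mul _) measurableSet_Ioc
      fun t ht => ?_
    have hta : 0 < t ^ a := rpow_pos_of_pos ht.1 a
    rw [Real.norm_eq_abs, abs_mul, abs_mul, abs_mul, abs_of_pos hta,
      abs_of_nonneg (pow_nonneg ht.1.le _), abs_of_nonneg (pow_nonneg hx _)]
    have := pow_le_pow_left₀ ht.1.le ht.2 (2 * n)
    nlinarith [abs_nonneg (c n), mul_nonneg (abs_nonneg (c n)) hta.le]
  have hsum : Summable fun n => ∫ t in Ioc 0 x, ‖c n * (t ^ a * t ^ (2 * n))‖ :=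
    .of_nonneg_of_le (fun n => integral_nonneg fun t => norm_nonneg _) hbound
      (hc.abs.mul_right _)
  rw [intervalIntegral.integral_of_le hx]
  simp_rw [← tsum_mul_left, mul_left_comm _ (c _)]
  rw [← integral_tsum_of_summable_integral_norm hint hsum]
  congr 1 with n
  rw [integral_const_mul, setIntegral_Ioc_rpow_mul_pow ha hx]

end Integral

section BesselIntegrals

variable {μ x : ℝ}

lemma integral_mul_besselJn_add_one (hμ : -1 < μ) (hx : 0 ≤ x) :
    ∫ t in (0)..x, t * besselJn (μ + 1) t = 2 * (μ + 1) * (1 - besselJn μ x) := by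
  have h := integral_rpow_mul_tsum (a := 1) (by norm_num) hx
    (summable_besselCoeff_mul (μ := μ + 1) (by linarith) x)
  simp only [rpow_one, ← besselJn_eq_tsum] at h
  rw [h, besselJn_eq_one_add_sq_mul_besselTail hμ, besselTail,
    show ∀ S : ℝ, 2 * (μ + 1) * (1 - (1 + x ^ 2 * S)) = -(2 * (μ + 1) * x ^ 2) * S by
      intro S; ring, ← tsum_mul_left]
  congr 1 with n
  have hn := add_natCast_add_one_pos hμ n
  rw [show (1 : ℝ) + 2 * n + 1 = ((2 * n + 2 : ℕ) : ℝ) by push_cast; ring, rpow_natCast,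
    besselCoeff_add_one hμ, besselCoeff_succ hμ, pow_add]
  push_cast
  field_simp
  ring

lemma integral_rpow_mul_besselJn (hμ : -1 < μ) (hx : 0 ≤ x) :
    ∫ t in (0)..x, t ^ (2 * μ + 1) * besselJn μ t =
      x ^ (2 * μ + 2) * besselJn (μ + 1) x / (2 * (μ + 1)) := by
  have h := integral_rpow_mul_tsum (a := 2 * μ + 1) (by linarith) hx
    (summable_besselCoeff_mul hμ x)
  simp only [← besselJn_eq_tsum] at h
  rw [h, besselJn_eq_tsum, mul_div_right_comm, ← tsum_mul_left]
  congr 1 with n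
  have hn := (add_natCast_add_one_pos hμ n).ne'
  rw [show 2 * μ + 1 + 2 * n + 1 = (2 * μ + 2) + ((2 * n : ℕ) : ℝ) by push_cast; ring,
    rpow_add' hx (by push_cast; linarith), rpow_natCast, besselCoeff_add_one hμ]
  have hμ1 : μ + 1 ≠ 0 := by linarith
  push_cast
  rw [show 2 * μ + 2 + 2 * (n : ℝ) = 2 * (μ + n + 1) by ring]
  field_simp

end BesselIntegrals

section Monotonicity

variable {μ : ℝ}

/-- `𝒥_{μ+1}(x)` is the mean of `𝒥_μ` over `[0, x]` against the weight
`(2μ+2) t^{2μ+1} / x^{2μ+2}`. -/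
lemma lt_besselJn_add_one_of_lt (hμ : -1 < μ) {x c : ℝ} (hx : 0 < x)
    (h : ∀ t ∈ Ioo 0 x, c < besselJn μ t) : c < besselJn (μ + 1) x := by
  have hμ' : 0 < 2 * (μ + 1) := by linarith
  have hw : IntervalIntegrable (fun t : ℝ => t ^ (2 * μ + 1)) volume 0 x :=
    intervalIntegral.intervalIntegrable_rpow' (by linarith)
  have hJ := hw.mul_continuousOn (continuous_besselJn hμ).continuousOn
  have hpos : 0 < ∫ t in (0)..x, (t ^ (2 * μ + 1) * besselJn μ t - t ^ (2 * μ + 1) * c) :=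
    intervalIntegral.intervalIntegral_pos_of_pos_on (hJ.sub (hw.mul_const c))
      (fun t ht => by rw [← mul_sub]; exact mul_pos (rpow_pos_of_pos ht.1 _) (sub_pos.2 (h t ht)))
      hx
  have hc : ∫ t in (0)..x, t ^ (2 * μ + 1) * c = x ^ (2 * μ + 2) * c / (2 * (μ + 1)) := by
    rw [intervalIntegral.integral_mul_const, integral_rpow (.inl (by linarith)),
      zero_rpow (by linarith), show 2 * μ + 1 + 1 = 2 * μ + 2 by ring]
    ring
  rw [intervalIntegral.integral_sub hJ (hw.mul_const c), integral_rpow_mul_besselJn hμ hx.le, hc,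
    ← sub_div, ← mul_sub] at hpos
  exact sub_pos.1 (pos_of_mul_pos_right (div_pos_iff_of_pos_right hμ' |>.1 hpos)
    (rpow_pos_of_pos hx _).le)

lemma besselJn_lt_of_pos (hμ : -1 < μ) {a b : ℝ} (ha : 0 ≤ a) (hab : a < b)
    (h : ∀ t ∈ Ioo a b, 0 < besselJn (μ + 1) t) : besselJn μ b < besselJn μ a := by
  have hI : Continuous fun t => t * besselJn (μ + 1) t :=
    continuous_id.mul (continuous_besselJn (by linarith))
  have hpos : 0 < ∫ t in a..b, t * besselJn (μ + 1) t :=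
    intervalIntegral.intervalIntegral_pos_of_pos_on (hI.intervalIntegrable _ _)
      (fun t ht => mul_pos (ha.trans_lt ht.1) (h t ht)) hab
  rw [← intervalIntegral.integral_interval_sub_left (hI.intervalIntegrable 0 b)
    (hI.intervalIntegrable 0 a), integral_mul_besselJn_add_one hμ (ha.trans hab.le),
    integral_mul_besselJn_add_one hμ ha] at hpos
  nlinarith

lemma four_mul_one_sub_besselJn_le (hμ : -1 < μ) {x : ℝ} (hx : 0 ≤ x)
    (h : ∀ t ∈ Icc 0 x, besselJn (μ + 1) t ≤ 1) :
    4 * (μ + 1) * (1 - besselJn μ x) ≤ x ^ 2 := by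
  have hle : ∫ t in (0)..x, t * besselJn (μ + 1) t ≤ ∫ t in (0)..x, t :=
    intervalIntegral.integral_mono_on hx
      ((continuous_id.mul (continuous_besselJn (by linarith))).intervalIntegrable _ _)
      (continuous_id.intervalIntegrable _ _)
      fun t ht => mul_le_of_le_one_right ht.1 (h t ht)
  rw [integral_mul_besselJn_add_one hμ hx, integral_id] at hle
  linarith

end Monotonicity

lemma pos_on_Ioo_of_forall_ne_zero {f : ℝ → ℝ} (hf : Continuous f) (h0 : 0 < f 0) {j : ℝ}
    (hne : ∀ y : ℝ, 0 < y → y < j → f y ≠ 0) : ∀ x ∈ Ioo 0 j, 0 < f x := by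
  intro x hx
  by_contra! hfx
  obtain ⟨y, hy, hfy⟩ := intermediate_value_Icc' hx.1.le hf.continuousOn ⟨hfx, h0.le⟩
  obtain rfl | hy0 := hy.1.eq_or_lt
  · exact h0.ne' hfy
  · exact hne y hy0 (hy.2.trans_lt hx.2) hfy

lemma exists_mem_Ioo_pos_of_left {f : ℝ → ℝ} {a b : ℝ} (hab : a < b)
    (hf : ContinuousAt f a) (ha : 0 < f a) : ∃ x ∈ Ioo a b, 0 < f x :=
  (((hf.eventually (lt_mem_nhds ha)).filter_mono nhdsWithin_le_nhds).and
    (Ioo_mem_nhdsGT hab)).exists.imp fun _ hx => ⟨hx.2, hx.1⟩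

lemma exists_mem_Ioo_pos_of_right {f : ℝ → ℝ} {a b : ℝ} (hab : a < b)
    (hf : ContinuousAt f b) (hb : 0 < f b) : ∃ x ∈ Ioo a b, 0 < f x :=
  (((hf.eventually (lt_mem_nhds hb)).filter_mono nhdsWithin_le_nhds).and
    (Ioo_mem_nhdsLT hab)).exists.imp fun _ hx => ⟨hx.2, hx.1⟩

section Huygens

variable {ν : ℝ}

lemma besselJn_mul_one_sub_pos_and_lt (hν : -1 < ν) {x : ℝ} (hx : 0 < x)
    (hpos : ∀ t ∈ Ioc 0 x, 0 < besselJn ν t) :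
    0 < besselJn ν x * (1 - besselJn (ν + 1) x) ∧
      (ν + 2) * (besselJn ν x * (1 - besselJn (ν + 1) x)) <
        (ν + 1) * (besselJn (ν + 1) x * (1 - besselJn ν x)) := by
  have hv (t) (ht : t ∈ Ioc 0 x) : 0 < besselJn (ν + 1) t :=
    lt_besselJn_add_one_of_lt hν ht.1 fun s hs => hpos s ⟨hs.1, hs.2.le.trans ht.2⟩
  have hw (t) (ht : t ∈ Ioc 0 x) : 0 < besselJn (ν + 1 + 1) t :=
    lt_besselJn_add_one_of_lt (by linarith) ht.1 fun s hs => hv s ⟨hs.1, hs.2.le.trans ht.2⟩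
  have hv_lt {a b : ℝ} (ha : 0 ≤ a) (hab : a < b) (hb : b ≤ x) :
      besselJn (ν + 1) b < besselJn (ν + 1) a :=
    besselJn_lt_of_pos (by linarith) ha hab fun t ht =>
      hw t ⟨ha.trans_lt ht.1, ht.2.le.trans hb⟩
  have hv_le_one (t) (ht : t ∈ Icc 0 x) : besselJn (ν + 1) t ≤ 1 := by
    obtain rfl | ht0 := ht.1.eq_or_lt
    · rw [besselJn_apply_zero (by linarith)]
    · simpa [besselJn_apply_zero (by linarith : -1 < ν + 1)] using (hv_lt le_rfl ht0 ht.2).le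
  have hu_lt_one : besselJn ν x < 1 := by
    simpa [besselJn_apply_zero hν] using
      besselJn_lt_of_pos hν le_rfl hx fun t ht => hv t ⟨ht.1, ht.2.le⟩
  have hv_lt_one : besselJn (ν + 1) x < 1 := by
    simpa [besselJn_apply_zero (by linarith : -1 < ν + 1)] using hv_lt le_rfl hx le_rfl
  have hvw : besselJn (ν + 1) x < besselJn (ν + 2) x := by
    rw [show ν + 2 = ν + 1 + 1 by ring]
    exact lt_besselJn_add_one_of_lt (by linarith) hx fun t ht => hv_lt ht.1.le ht.2 le_rfl
  have hrec := four_mul_besselJn_add_one_sub hν x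
  have h1u := four_mul_one_sub_besselJn_le hν hx.le hv_le_one
  have hvx := hv x ⟨hx, le_rfl⟩
  refine ⟨mul_pos (hpos x ⟨hx, le_rfl⟩) (by linarith), ?_⟩
  have h1 := mul_le_mul_of_nonneg_right h1u hvx.le
  have h2 := mul_lt_mul_of_pos_left hvw (by positivity : 0 < x ^ 2)
  nlinarith

lemma exists_lt_besselJn_mul_one_sub (hν : -1 < ν) {p j : ℝ} (hj : 0 < j)
    (hp : p < (ν + 1) / (ν + 2)) :
    ∃ x ∈ Ioo 0 j, p * (besselJn (ν + 1) x * (1 - besselJn ν x)) <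
      besselJn ν x * (1 - besselJn (ν + 1) x) := by
  have hν1 : -1 < ν + 1 := by linarith
  set χ : ℝ → ℝ := fun x => p * besselJn (ν + 1) x * besselTail ν x -
    besselJn ν x * besselTail (ν + 1) x
  have hχ : Continuous χ := by fun_prop (disch := assumption)
  have hχ0 : 0 < χ 0 := by
    have h1 : ν + 1 ≠ 0 := by linarith
    have h2 : ν + 1 + 1 ≠ 0 := by linarith
    have h2' : ν + 2 ≠ 0 := by linarith
    rw [lt_div_iff₀ (by linarith)] at hp
    simp only [χ, besselJn_apply_zero hν, besselJn_apply_zero hν1, besselTail_apply_zero hν,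
      besselTail_apply_zero hν1]
    rw [show p * 1 * -(4 * (ν + 1))⁻¹ - 1 * -(4 * (ν + 1 + 1))⁻¹ =
      (ν + 1 - p * (ν + 2)) / (4 * (ν + 1) * (ν + 2)) by field_simp; ring]
    exact div_pos (by linarith) (by nlinarith)
  obtain ⟨x, hx, hχx⟩ := exists_mem_Ioo_pos_of_left hj hχ.continuousAt hχ0
  refine ⟨x, hx, sub_pos.1 ?_⟩
  have hψ : besselJn ν x * (1 - besselJn (ν + 1) x) -
      p * (besselJn (ν + 1) x * (1 - besselJn ν x)) = x ^ 2 * χ x := by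
    linear_combination (p * besselJn (ν + 1) x) * besselJn_eq_one_add_sq_mul_besselTail hν x -
      besselJn ν x * besselJn_eq_one_add_sq_mul_besselTail hν1 x
  exact hψ ▸ mul_pos (pow_pos hx.1 2) hχx

lemma exists_besselJn_mul_one_sub_lt (hν : -1 < ν) {q j : ℝ} (hj : 0 < j)
    (hjz : besselJn ν j = 0) (hpos : ∀ t ∈ Ioo 0 j, 0 < besselJn ν t) (hq : 0 < q) :
    ∃ x ∈ Ioo 0 j, besselJn ν x * (1 - besselJn (ν + 1) x) <
      q * (besselJn (ν + 1) x * (1 - besselJn ν x)) := by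
  have hvj : 0 < besselJn (ν + 1) j := lt_besselJn_add_one_of_lt hν hj hpos
  obtain ⟨x, hx, hlt⟩ := exists_mem_Ioo_pos_of_right hj
    (f := fun x => q * (besselJn (ν + 1) x * (1 - besselJn ν x)) -
      besselJn ν x * (1 - besselJn (ν + 1) x))
    (by fun_prop (disch := linarith)) (by simpa [hjz] using mul_pos hq hvj)
  exact ⟨x, hx, sub_pos.1 hlt⟩

end Huygens

section Algebra

variable {K : Type*} [Field K] [LinearOrder K] [IsStrictOrderedRing K] {u v p : K}

lemma one_lt_sub_mul_add_mul_div_iff (hu : 0 < u) :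
    1 < (1 - p) * v + p * v / u ↔ u * (1 - v) < p * (v * (1 - u)) := by
  have h : (1 - p) * v + p * v / u - 1 = (p * (v * (1 - u)) - u * (1 - v)) / u := by
    field_simp
    ring
  rw [← sub_pos, h, div_pos_iff_of_pos_right hu, sub_pos]

lemma sub_mul_add_mul_div_lt_one_iff (hu : 0 < u) :
    (1 - p) * v + p * v / u < 1 ↔ p * (v * (1 - u)) < u * (1 - v) := by
  have h : 1 - ((1 - p) * v + p * v / u) = (u * (1 - v) - p * (v * (1 - u))) / u := by
    field_simp
    ring
  rw [← sub_pos, h, div_pos_iff_of_pos_right hu, sub_pos]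

end Algebra

theorem besselJ_huygens_iff_general (ν p q j : ℝ) (hν1 : -1 < ν)
    (hj0 : 0 < j) (hjz : besselJn ν j = 0)
    (hjfirst : ∀ y : ℝ, 0 < y → y < j → besselJn ν y ≠ 0) :
    (∀ x : ℝ, 0 < x → x < j →
      (1 - p) * besselJn (ν + 1) x + p * besselJn (ν + 1) x / besselJn ν x > 1 ∧
      1 > (1 - q) * besselJn (ν + 1) x + q * besselJn (ν + 1) x / besselJn ν x) ↔
    (p ≥ (ν + 1) / (ν + 2) ∧ q ≤ 0) := by
  have hu : ∀ x ∈ Ioo 0 j, 0 < besselJn ν x := pos_on_Ioo_of_forall_ne_zero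
    (continuous_besselJn hν1) (by rw [besselJn_apply_zero hν1]; exact one_pos) hjfirst
  have hbounds {x : ℝ} (hx : x ∈ Ioo 0 j) := besselJn_mul_one_sub_pos_and_lt hν1 hx.1
    fun t ht => hu t ⟨ht.1, ht.2.trans_lt hx.2⟩
  constructor
  · intro H
    constructor
    · by_contra! hp
      obtain ⟨x, hx, hlt⟩ := exists_lt_besselJn_mul_one_sub hν1 hj0 hp
      exact lt_asymm hlt ((one_lt_sub_mul_add_mul_div_iff (hu x hx)).1 (H x hx.1 hx.2).1)
    · by_contra! hq
      obtain ⟨x, hx, hlt⟩ := exists_besselJn_mul_one_sub_lt hν1 hj0 hjz hu hq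
      exact lt_asymm hlt ((sub_mul_add_mul_div_lt_one_iff (hu x hx)).1 (H x hx.1 hx.2).2)
  · rintro ⟨hp, hq⟩ x hx hxj
    obtain ⟨hR, hRS⟩ := hbounds ⟨hx, hxj⟩
    have hS : 0 < besselJn (ν + 1) x * (1 - besselJn ν x) := by nlinarith
    refine ⟨(one_lt_sub_mul_add_mul_div_iff (hu x ⟨hx, hxj⟩)).2 ?_,
      (sub_mul_add_mul_div_lt_one_iff (hu x ⟨hx, hxj⟩)).2 ?_⟩
    · calc besselJn ν x * (1 - besselJn (ν + 1) x)
          < (ν + 1) / (ν + 2) * (besselJn (ν + 1) x * (1 - besselJn ν x)) := by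
            rw [div_mul_eq_mul_div, lt_div_iff₀ (by linarith)]
            linarith
        _ ≤ p * (besselJn (ν + 1) x * (1 - besselJn ν x)) := by gcongr
    · nlinarith

theorem besselJ_huygens_iff (ν p q j : ℝ) (hν1 : -1 < ν) (hν2 : ν ≤ 0)
    (hj0 : 0 < j) (hjz : besselJn ν j = 0)
    (hjfirst : ∀ y : ℝ, 0 < y → y < j → besselJn ν y ≠ 0) :
    (∀ x : ℝ, 0 < x → x < j →
      (1 - p) * besselJn (ν + 1) x + p * besselJn (ν + 1) x / besselJn ν x > 1 ∧
      1 > (1 - q) * besselJn (ν + 1) x + q * besselJn (ν + 1) x / besselJn ν x) ↔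
    (p ≥ (ν + 1) / (ν + 2) ∧ q ≤ 0) :=
  besselJ_huygens_iff_general ν p q j hν1 hj0 hjz hjfirst
end
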